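/- Let X = (X_1, ..., X_m) have independent components, each taking values in (0,1). Let Q^L = -2 log(∏_{j=1}^m X_j) and Q^R = -2 log(∏_{j=1}^m (1 - X_j)). Then for any A_L > 0 and A_R > 0, Pr(Q^L > A_L and Q^R > A_R) ≤ Pr(Q^L > A_L) · Pr(Q^R > A_R). -/

import Mathlib

/-!
The map `X ↦ ∏ X j` is nondecreasing and `X ↦ ∏ (1 - X j)` nonincreasing, so `{Q^L > A_L}` is
the preimage of a lower set and `{Q^R > A_R}` that of an upper set under `ω ↦ X ω`. By
independence the law of `X` is a product measure, and the Harris inequality says that a lower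
and an upper set are negatively correlated under a product of measures on linear orders. Harris
follows by induction on the number of coordinates from Chebyshev's integral inequality in one
variable, which in turn is the pointwise rearrangement inequality
`f x g x + f y g y ≤ f x g y + f y g x` integrated over `ν ⊗ ν`.
-/

open MeasureTheory ProbabilityTheory Real Finset

open scoped ENNReal

lemma ENNReal.mul_add_mul_le_mul_add_mul {a b c d : ℝ≥0∞} (hab : a ≤ b) (hcd : c ≤ d) :
    a * d + b * c ≤ a * c + b * d := by
  obtain ⟨e, rfl⟩ : ∃ e, d = c + e := ⟨d - c, (add_tsub_cancel_of_le hcd).symm⟩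
  calc a * (c + e) + b * c = (a * c + b * c) + a * e := by ring
    _ ≤ (a * c + b * c) + b * e := by gcongr
    _ = a * c + b * (c + e) := by ring

lemma lintegral_mul_le_lintegral_mul_lintegral_of_antitone_of_monotone
    {α : Type*} [MeasurableSpace α] [LinearOrder α] {ν : Measure α} [IsProbabilityMeasure ν]
    {f g : α → ℝ≥0∞} (hf : Measurable f) (hg : Measurable g)
    (hf_anti : Antitone f) (hg_mono : Monotone g) :
    ∫⁻ x, f x * g x ∂ν ≤ (∫⁻ x, f x ∂ν) * ∫⁻ x, g x ∂ν := by
  have pair : ∀ x y, f x * g x + f y * g y ≤ f x * g y + f y * g x := by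
    intro x y
    rcases le_total x y with hxy | hyx
    · simpa only [add_comm] using
        ENNReal.mul_add_mul_le_mul_add_mul (hf_anti hxy) (hg_mono hxy)
    · exact ENNReal.mul_add_mul_le_mul_add_mul (hf_anti hyx) (hg_mono hyx)
  have diag : ∫⁻ x, ∫⁻ y, (f x * g x + f y * g y) ∂ν ∂ν = 2 * ∫⁻ x, f x * g x ∂ν := by
    simp [lintegral_add_left, lintegral_add_right, two_mul]
  have cross : ∫⁻ x, ∫⁻ y, (f x * g y + f y * g x) ∂ν ∂ν
      = 2 * ((∫⁻ x, f x ∂ν) * ∫⁻ x, g x ∂ν) := by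
    simp [lintegral_add_left, lintegral_const_mul, lintegral_mul_const, hf, hg, hg.const_mul]
    ring
  have two_mul_le : 2 * ∫⁻ x, f x * g x ∂ν ≤ 2 * ((∫⁻ x, f x ∂ν) * ∫⁻ x, g x ∂ν) := by
    rw [← diag, ← cross]
    exact lintegral_mono fun x ↦ lintegral_mono fun y ↦ pair x y
  exact (ENNReal.mul_le_mul_iff_right two_ne_zero ENNReal.ofNat_ne_top).mp two_mul_le

lemma measurable_fin_cons {α : Type*} [MeasurableSpace α] {n : ℕ} :
    Measurable (fun q : α × (Fin n → α) ↦ (Fin.cons q.1 q.2 : Fin (n + 1) → α)) :=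
  measurable_pi_lambda _ fun i ↦
    Fin.cases measurable_fst (fun j ↦ (measurable_pi_apply j).comp measurable_snd) i

lemma lintegral_pi_fin_succ {α : Type*} [MeasurableSpace α] {n : ℕ}
    (ν : Fin (n + 1) → Measure α) [∀ i, SigmaFinite (ν i)]
    {h : (Fin (n + 1) → α) → ℝ≥0∞} (hh : Measurable h) :
    ∫⁻ x, h x ∂Measure.pi ν
      = ∫⁻ p, ∫⁻ a, h (Fin.cons a p) ∂ν 0 ∂Measure.pi (fun j ↦ ν j.succ) := by
  let e := MeasurableEquiv.piFinSuccAbove (fun _ : Fin (n + 1) ↦ α) 0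
  rw [← (measurePreserving_piFinSuccAbove ν 0).symm.lintegral_comp hh,
    lintegral_prod_symm' (fun q ↦ h (e.symm q)) (hh.comp e.symm.measurable)]
  simp [e, Fin.consEquiv]

theorem lintegral_pi_mul_le_lintegral_mul_lintegral_of_antitone_of_monotone
    {α : Type*} [MeasurableSpace α] [LinearOrder α] :
    ∀ {n : ℕ} (ν : Fin n → Measure α) [∀ i, IsProbabilityMeasure (ν i)]
      {f g : (Fin n → α) → ℝ≥0∞}, Measurable f → Measurable g → Antitone f → Monotone g →
      ∫⁻ x, f x * g x ∂Measure.pi ν ≤ (∫⁻ x, f x ∂Measure.pi ν) * ∫⁻ x, g x ∂Measure.pi ν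
  | 0, ν, _, f, g, hf, hg, _, _ => by
    rw [Measure.pi_of_empty]
    simp [lintegral_dirac' _ hf, lintegral_dirac' _ hg]
  | n + 1, ν, _, f, g, hf, hg, hf_anti, hg_mono => by
    have cons_mono : Monotone (fun q : α × (Fin n → α) ↦ (Fin.cons q.1 q.2 : Fin (n + 1) → α)) :=
      fun _ _ hq ↦ Fin.cons_le_cons.2 hq
    let ν' : Fin n → Measure α := fun j ↦ ν j.succ
    let F p := ∫⁻ a, f (Fin.cons a p) ∂ν 0
    let G p := ∫⁻ a, g (Fin.cons a p) ∂ν 0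
    have hF : Measurable F := (hf.comp measurable_fin_cons).lintegral_prod_left'
    have hG : Measurable G := (hg.comp measurable_fin_cons).lintegral_prod_left'
    have hF_anti : Antitone F := fun p p' hp ↦
      lintegral_mono fun a ↦ hf_anti (cons_mono (show (a, p) ≤ (a, p') from ⟨le_rfl, hp⟩))
    have hG_mono : Monotone G := fun p p' hp ↦
      lintegral_mono fun a ↦ hg_mono (cons_mono (show (a, p) ≤ (a, p') from ⟨le_rfl, hp⟩))
    calc ∫⁻ x, f x * g x ∂Measure.pi ν
        = ∫⁻ p, ∫⁻ a, f (Fin.cons a p) * g (Fin.cons a p) ∂ν 0 ∂Measure.pi ν' :=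
          lintegral_pi_fin_succ ν (hf.mul hg)
      _ ≤ ∫⁻ p, F p * G p ∂Measure.pi ν' := by
          refine lintegral_mono fun p ↦ ?_
          have hcons : Measurable (fun a : α ↦ (Fin.cons a p : Fin (n + 1) → α)) :=
            measurable_fin_cons.comp (measurable_id.prodMk measurable_const)
          exact lintegral_mul_le_lintegral_mul_lintegral_of_antitone_of_monotone
            (hf.comp hcons) (hg.comp hcons)
            (fun a b hab ↦ hf_anti (cons_mono (show (a, p) ≤ (b, p) from ⟨hab, le_rfl⟩)))
            (fun a b hab ↦ hg_mono (cons_mono (show (a, p) ≤ (b, p) from ⟨hab, le_rfl⟩)))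
      _ ≤ (∫⁻ p, F p ∂Measure.pi ν') * ∫⁻ p, G p ∂Measure.pi ν' :=
          lintegral_pi_mul_le_lintegral_mul_lintegral_of_antitone_of_monotone ν' hF hG hF_anti
            hG_mono
      _ = (∫⁻ x, f x ∂Measure.pi ν) * ∫⁻ x, g x ∂Measure.pi ν := by
          rw [lintegral_pi_fin_succ ν hf, lintegral_pi_fin_succ ν hg]

lemma IsLowerSet.antitone_indicator_one {α : Type*} [Preorder α] {s : Set α}
    (hs : IsLowerSet s) : Antitone (s.indicator (1 : α → ℝ≥0∞)) := fun x y hxy ↦ by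
  by_cases hy : y ∈ s
  · simp [hy, hs hxy hy]
  · simp [hy]

lemma IsUpperSet.monotone_indicator_one {α : Type*} [Preorder α] {s : Set α}
    (hs : IsUpperSet s) : Monotone (s.indicator (1 : α → ℝ≥0∞)) := fun x y hxy ↦ by
  by_cases hx : x ∈ s
  · simp [hx, hs hxy hx]
  · simp [hx]

theorem measure_pi_inter_le_of_isLowerSet_of_isUpperSet
    {α : Type*} [MeasurableSpace α] [LinearOrder α] {n : ℕ}
    (ν : Fin n → Measure α) [∀ i, IsProbabilityMeasure (ν i)] {D U : Set (Fin n → α)}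
    (hD : IsLowerSet D) (hU : IsUpperSet U) (hD_meas : MeasurableSet D)
    (hU_meas : MeasurableSet U) :
    Measure.pi ν (D ∩ U) ≤ Measure.pi ν D * Measure.pi ν U := by
  have harris := lintegral_pi_mul_le_lintegral_mul_lintegral_of_antitone_of_monotone ν
    (f := D.indicator 1) (g := U.indicator 1) (measurable_const.indicator hD_meas)
    (measurable_const.indicator hU_meas)
    hD.antitone_indicator_one hU.monotone_indicator_one
  rwa [← Pi.mul_def, ← Set.inter_indicator_one, lintegral_indicator_one (hD_meas.inter hU_meas),
    lintegral_indicator_one hD_meas, lintegral_indicator_one hU_meas] at harris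

theorem ProbabilityTheory.iIndepFun.measure_preimage_inter_le_of_isLowerSet_of_isUpperSet
    {Ω α : Type*} [MeasurableSpace Ω] [MeasurableSpace α] [LinearOrder α] {μ : Measure Ω}
    {n : ℕ} {X : Fin n → Ω → α} (hX : ∀ i, Measurable (X i)) (hindep : iIndepFun X μ)
    {D U : Set (Fin n → α)} (hD : IsLowerSet D) (hU : IsUpperSet U)
    (hD_meas : MeasurableSet D) (hU_meas : MeasurableSet U) :
    μ ((fun ω i ↦ X i ω) ⁻¹' (D ∩ U))
      ≤ μ ((fun ω i ↦ X i ω) ⁻¹' D) * μ ((fun ω i ↦ X i ω) ⁻¹' U) := by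
  have := hindep.isProbabilityMeasure
  have : ∀ i, IsProbabilityMeasure (μ.map (X i)) :=
    fun i ↦ Measure.isProbabilityMeasure_map (hX i).aemeasurable
  have hT : Measurable (fun ω i ↦ X i ω) := measurable_pi_lambda _ hX
  rw [← Measure.map_apply hT (hD_meas.inter hU_meas), ← Measure.map_apply hT hD_meas,
    ← Measure.map_apply hT hU_meas, hindep.map_fun_eq_pi_map fun i ↦ (hX i).aemeasurable]
  exact measure_pi_inter_le_of_isLowerSet_of_isUpperSet _ hD hU hD_meas hU_meas

lemma lt_neg_two_mul_log_iff {A p : ℝ} (hp : 0 < p) : A < -2 * log p ↔ p < exp (-(A / 2)) := by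
  rw [← log_lt_iff_lt_exp hp]
  constructor <;> intro h <;> linarith

theorem stmt3_general {Ω : Type*} [MeasurableSpace Ω] (μ : Measure Ω) [IsProbabilityMeasure μ]
    (m : ℕ) (X : Fin m → Ω → ℝ)
    (hmeas : ∀ j, Measurable (X j))
    (hindep : iIndepFun X μ)
    (hrange : ∀ j ω, X j ω ∈ Set.Ioo (0 : ℝ) 1)
    (QL QR : Ω → ℝ)
    (hQL : ∀ ω, QL ω = -2 * Real.log (∏ j, X j ω))
    (hQR : ∀ ω, QR ω = -2 * Real.log (∏ j, (1 - X j ω)))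
    (AL AR : ℝ) :
    (μ {ω | QL ω > AL ∧ QR ω > AR}).toReal ≤
      (μ {ω | QL ω > AL}).toReal * (μ {ω | QR ω > AR}).toReal := by
  -- `max · 0` makes both products monotone on all of `ℝ^m`, and is harmless on the range of `X`.
  let D := {x : Fin m → ℝ | ∏ j, max (x j) 0 < exp (-(AL / 2))}
  let U := {x : Fin m → ℝ | ∏ j, max (1 - x j) 0 < exp (-(AR / 2))}
  have hD : IsLowerSet D := fun x y hyx hx ↦ lt_of_le_of_lt
    (prod_le_prod (fun _ _ ↦ le_max_right _ _) fun j _ ↦ max_le_max_right 0 (hyx j)) hx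
  have hU : IsUpperSet U := fun x y hxy hx ↦ lt_of_le_of_lt
    (prod_le_prod (fun _ _ ↦ le_max_right _ _) fun j _ ↦
      max_le_max_right 0 (sub_le_sub_left (hxy j) 1)) hx
  have hL : {ω | QL ω > AL} = (fun ω j ↦ X j ω) ⁻¹' D := by
    ext ω
    have hX : ∀ j, max (X j ω) 0 = X j ω := fun j ↦ max_eq_left (hrange j ω).1.le
    simpa [D, hX, hQL] using lt_neg_two_mul_log_iff (prod_pos fun j _ ↦ (hrange j ω).1)
  have hR : {ω | QR ω > AR} = (fun ω j ↦ X j ω) ⁻¹' U := by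
    ext ω
    have hX : ∀ j, max (1 - X j ω) 0 = 1 - X j ω :=
      fun j ↦ max_eq_left (sub_nonneg.2 (hrange j ω).2.le)
    simpa [U, hX, hQR] using
      lt_neg_two_mul_log_iff (prod_pos fun j _ ↦ sub_pos.2 (hrange j ω).2)
  have harris := hindep.measure_preimage_inter_le_of_isLowerSet_of_isUpperSet hmeas hD hU
    (measurableSet_lt (by fun_prop) measurable_const)
    (measurableSet_lt (by fun_prop) measurable_const)
  rw [Set.ofPred_and, hL, hR, ← ENNReal.toReal_mul, ← Set.preimage_inter]
  exact ENNReal.toReal_mono (by finiteness) harris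

/-- Lemma 4 of Owen (2009): for `X = (X 1, ..., X m)` with independent components taking
values in `(0,1)`, `Q^L = -2 log ∏ X j` and `Q^R = -2 log ∏ (1 - X j)`, for any
`A_L > 0` and `A_R > 0`,
`Pr(Q^L > A_L, Q^R > A_R) ≤ Pr(Q^L > A_L) * Pr(Q^R > A_R)`. -/
theorem stmt3 {Ω : Type*} [MeasurableSpace Ω] (μ : Measure Ω) [IsProbabilityMeasure μ]
    (m : ℕ) (X : Fin m → Ω → ℝ)
    (hmeas : ∀ j, Measurable (X j))
    (hindep : iIndepFun X μ)
    (hrange : ∀ j ω, X j ω ∈ Set.Ioo (0 : ℝ) 1)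
    (QL QR : Ω → ℝ)
    (hQL : ∀ ω, QL ω = -2 * Real.log (∏ j, X j ω))
    (hQR : ∀ ω, QR ω = -2 * Real.log (∏ j, (1 - X j ω)))
    (AL AR : ℝ) (hAL : 0 < AL) (hAR : 0 < AR) :
    (μ {ω | QL ω > AL ∧ QR ω > AR}).toReal ≤
      (μ {ω | QL ω > AL}).toReal * (μ {ω | QR ω > AR}).toReal :=
  stmt3_general μ m X hmeas hindep hrange QL QR hQL hQR AL AR
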